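/- arXiv:1708.06049 — 5 statements merged into one kernel-verified Lean document; each statement's English description precedes it below -/
import Mathlib

section
/- Let n ≥ 3 be an integer and let h : ℝ → ℝ be continuously differentiable with h(r) > 0 for all r, h'(0) = 0, h'(r) > 0 for all r > 0, and h'(r) < 0 for all r < 0. If R : [0, ∞) → ℝ solves R'(t) = -(n-1)·h'(R(t))/h(R(t)) with R(0) = a ≠ 0, then R(t) → 0 as t → ∞. -/
/-!
Write the equation as `R' = -F(R)` with `F = (n-1) h'/h`. The sign conditions on `h'` say that
`r F(r) > 0` for `r ≠ 0`, so `R²` is a Lyapunov function: `(R²)' = -2 R F(R) ≤ 0`. If `R²`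
stayed above some `ε > 0`, then `R` would stay in the compact set `ε ≤ r² ≤ R(0)²`, where
`r F(r)` has a positive minimum `m`; hence `R(t)² ≤ R(0)² - 2mt`, which becomes negative.
-/

open Set Filter Topology

section Lyapunov

variable {F R : ℝ → ℝ}

theorem antitoneOn_sq_add_mul_of_hasDerivAt {m : ℝ}
    (hR : ∀ t, 0 ≤ t → HasDerivAt R (-F (R t)) t)
    (hm : ∀ t, 0 ≤ t → m ≤ R t * F (R t)) :
    AntitoneOn (fun t => R t ^ 2 + 2 * m * t) (Ici 0) := by
  have hV : ∀ t, 0 ≤ t →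
      HasDerivAt (fun t => R t ^ 2 + 2 * m * t) (2 * (m - R t * F (R t))) t := fun t ht => by
    refine (((hR t ht).fun_pow 2).fun_add
      ((hasDerivAt_id' t).const_mul (2 * m))).congr_deriv ?_
    norm_num
    ring
  refine antitoneOn_of_hasDerivWithinAt_nonpos (f' := fun t => 2 * (m - R t * F (R t)))
    (convex_Ici 0)
    (fun t ht => (hV t ht).continuousAt.continuousWithinAt) (fun t ht => ?_) (fun t ht => ?_)
  · rw [interior_Ici] at ht
    exact (hV t (le_of_lt ht)).hasDerivWithinAt
  · rw [interior_Ici] at ht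
    linarith [hm t (le_of_lt ht)]

theorem antitoneOn_sq_of_hasDerivAt (hsign : ∀ r, r ≠ 0 → 0 < r * F r)
    (hR : ∀ t, 0 ≤ t → HasDerivAt R (-F (R t)) t) :
    AntitoneOn (fun t => R t ^ 2) (Ici 0) := by
  have h := antitoneOn_sq_add_mul_of_hasDerivAt (m := 0) hR fun t _ => by
    rcases eq_or_ne (R t) 0 with h0 | h0
    · simp [h0]
    · exact (hsign _ h0).le
  simpa using h

theorem exists_sq_lt_of_hasDerivAt (hF : Continuous F) (hsign : ∀ r, r ≠ 0 → 0 < r * F r)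
    (hR : ∀ t, 0 ≤ t → HasDerivAt R (-F (R t)) t) {ε : ℝ} (hε : 0 < ε) :
    ∃ t, 0 ≤ t ∧ R t ^ 2 < ε := by
  by_contra! hge
  have hK : IsCompact {r : ℝ | ε ≤ r ^ 2 ∧ r ^ 2 ≤ R 0 ^ 2} := by
    refine isCompact_Icc.of_isClosed_subset ?_ fun r hr => abs_le.1 (Real.abs_le_sqrt hr.2)
    exact (isClosed_le continuous_const (continuous_pow 2)).inter
      (isClosed_le (continuous_pow 2) continuous_const)
  obtain ⟨m, hm, hmK⟩ := hK.exists_forall_le' (continuous_id.mul hF).continuousOn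
    fun r hr => hsign r fun h0 => hε.not_ge (by simpa [h0] using hr.1)
  have hdecay := antitoneOn_sq_add_mul_of_hasDerivAt hR fun t ht =>
    hmK (R t) ⟨hge t ht, antitoneOn_sq_of_hasDerivAt hsign hR (mem_Ici.2 le_rfl) ht ht⟩
  have hT : 0 ≤ R 0 ^ 2 / (2 * m) + 1 := by positivity
  have h2mT : 2 * m * (R 0 ^ 2 / (2 * m) + 1) = R 0 ^ 2 + 2 * m := by field_simp
  have hRT := hdecay (mem_Ici.2 le_rfl) hT hT
  simp only [mul_zero, add_zero, h2mT] at hRT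
  linarith [hge _ hT]

theorem tendsto_zero_of_hasDerivAt_of_mul_pos (hF : Continuous F)
    (hsign : ∀ r, r ≠ 0 → 0 < r * F r) (hR : ∀ t, 0 ≤ t → HasDerivAt R (-F (R t)) t) :
    Tendsto R atTop (𝓝 0) := by
  rw [Metric.tendsto_atTop]
  intro ε hε
  obtain ⟨t₀, ht₀, hlt⟩ := exists_sq_lt_of_hasDerivAt hF hsign hR (pow_pos hε 2)
  refine ⟨t₀, fun t ht => ?_⟩
  have hle : R t ^ 2 ≤ R t₀ ^ 2 :=
    antitoneOn_sq_of_hasDerivAt hsign hR ht₀ (ht₀.trans ht) ht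
  rw [Real.dist_0_eq_abs]
  exact abs_lt_of_sq_lt_sq (hle.trans_lt hlt) hε.le

end Lyapunov

theorem stmt_1_general (n : ℕ) (hn : 3 ≤ n) (h : ℝ → ℝ) (hC1 : ContDiff ℝ 1 h)
    (hpos : ∀ r : ℝ, 0 < h r)
    (hdpos : ∀ r : ℝ, 0 < r → 0 < deriv h r)
    (hdneg : ∀ r : ℝ, r < 0 → deriv h r < 0)
    (R : ℝ → ℝ)
    (hR : ∀ t : ℝ, 0 ≤ t →
      HasDerivAt R (-(n - 1 : ℝ) * deriv h (R t) / h (R t)) t) :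
    Filter.Tendsto R Filter.atTop (nhds 0) := by
  have hc : (0 : ℝ) < n - 1 := by
    have : (3 : ℝ) ≤ n := by exact_mod_cast hn
    linarith
  refine tendsto_zero_of_hasDerivAt_of_mul_pos (F := fun r => (n - 1 : ℝ) * deriv h r / h r)
    ((continuous_const.mul (hC1.continuous_deriv le_rfl)).div hC1.continuous
      fun r => (hpos r).ne')
    (fun r hr => ?_) (fun t ht => (hR t ht).congr_deriv (by ring))
  rcases hr.lt_or_gt with hneg | hpos'
  · exact mul_pos_of_neg_of_neg hneg
      (div_neg_of_neg_of_pos (mul_neg_of_pos_of_neg hc (hdneg r hneg)) (hpos r))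
  · exact mul_pos hpos' (div_pos (mul_pos hc (hdpos r hpos')) (hpos r))

/-- any global solution of the barrier ODE `R' = -(n-1)·h'(R)/h(R)` on `[0, ∞)`
with `R(0) = a ≠ 0` tends to `0` as `t → ∞`. -/
theorem stmt_1 (n : ℕ) (hn : 3 ≤ n) (h : ℝ → ℝ) (hC1 : ContDiff ℝ 1 h)
    (hpos : ∀ r : ℝ, 0 < h r) (hd0 : deriv h 0 = 0)
    (hdpos : ∀ r : ℝ, 0 < r → 0 < deriv h r)
    (hdneg : ∀ r : ℝ, r < 0 → deriv h r < 0)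
    (a : ℝ) (ha : a ≠ 0) (R : ℝ → ℝ) (hR0 : R 0 = a)
    (hR : ∀ t : ℝ, 0 ≤ t →
      HasDerivAt R (-(n - 1 : ℝ) * deriv h (R t) / h (R t)) t) :
    Filter.Tendsto R Filter.atTop (nhds 0) :=
  stmt_1_general n hn h hC1 hpos hdpos hdneg R hR
end

section
/- Let n ≥ 3 be an integer, let h : ℝ → ℝ be continuously differentiable with h(r) > 0 for all r, let R : [0, ∞) → ℝ be differentiable with R'(t) = -(n-1)·h'(R(t))/h(R(t)) and R(0) = a, and let f̄ : [0, ∞) → ℝ be differentiable with f̄'(t) = -2(n-1)·(1 - f̄(t))·h'(R(t))²/h(R(t))² and f̄(0) = f̄₀ ∈ [0, 1]. Then (1 - f̄(t))·h(R(t))² = (1 - f̄₀)·h(a)² for all t ≥ 0. -/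
theorem apply_eq_apply_zero_of_hasDerivAt_zero {Λ : ℝ → ℝ}
    (hΛ : ∀ s : ℝ, 0 ≤ s → HasDerivAt Λ 0 s) {t : ℝ} (ht : 0 ≤ t) : Λ t = Λ 0 :=
  constant_of_has_deriv_right_zero
    (fun x hx => (hΛ x hx.1).continuousAt.continuousWithinAt)
    (fun x hx => (hΛ x hx.1).hasDerivWithinAt) t ⟨ht, le_rfl⟩

/-- Along `R' = -c h'(R)/h(R)` the factor `h(R)²` changes at the rate `-2c h'(R)²`, which
cancels the rate `2c (1 - f) h'(R)² / h(R)²` of `1 - f`. -/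
theorem hasDerivAt_one_sub_mul_sq_comp_zero {h R f : ℝ → ℝ} {c h' s : ℝ}
    (hh : HasDerivAt h h' (R s)) (hne : h (R s) ≠ 0)
    (hR : HasDerivAt R (-c * h' / h (R s)) s)
    (hf : HasDerivAt f (-2 * c * (1 - f s) * h' ^ 2 / h (R s) ^ 2) s) :
    HasDerivAt (fun u => (1 - f u) * h (R u) ^ 2) 0 s := by
  refine ((hf.const_sub 1).fun_mul ((hh.comp s hR).fun_pow 2)).congr_deriv ?_
  simp only [Function.comp_apply]
  field_simp
  ring

theorem stmt_3_general (n : ℕ) (h : ℝ → ℝ) (hC1 : ContDiff ℝ 1 h)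
    (hpos : ∀ r : ℝ, 0 < h r)
    (a : ℝ) (R : ℝ → ℝ) (hR0 : R 0 = a)
    (hR : ∀ t : ℝ, 0 ≤ t →
      HasDerivAt R (-(n - 1 : ℝ) * deriv h (R t) / h (R t)) t)
    (f₀ : ℝ)
    (f : ℝ → ℝ) (hf0 : f 0 = f₀)
    (hf : ∀ t : ℝ, 0 ≤ t →
      HasDerivAt f
        (-2 * (n - 1 : ℝ) * (1 - f t) * (deriv h (R t)) ^ 2 / (h (R t)) ^ 2) t) :
    ∀ t : ℝ, 0 ≤ t → (1 - f t) * (h (R t)) ^ 2 = (1 - f₀) * (h a) ^ 2 := by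
  intro t ht
  have hh : Differentiable ℝ h := hC1.differentiable one_ne_zero
  have hconst := apply_eq_apply_zero_of_hasDerivAt_zero (fun s hs =>
    hasDerivAt_one_sub_mul_sq_comp_zero (hh (R s)).hasDerivAt (hpos (R s)).ne'
      (hR s hs) (hf s hs)) ht
  simpa only [hR0, hf0] using hconst

/-- Lemma 3.5 of the paper: the quantity `(1 - f̄(t))·h(R(t))²` is conserved
along the coupled ODEs `R' = -(n-1)·h'(R)/h(R)` and `f̄' = -2(n-1)(1-f̄)·h'(R)²/h(R)²`. -/
theorem stmt_3 (n : ℕ) (hn : 3 ≤ n) (h : ℝ → ℝ) (hC1 : ContDiff ℝ 1 h)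
    (hpos : ∀ r : ℝ, 0 < h r)
    (a : ℝ) (R : ℝ → ℝ) (hR0 : R 0 = a)
    (hR : ∀ t : ℝ, 0 ≤ t →
      HasDerivAt R (-(n - 1 : ℝ) * deriv h (R t) / h (R t)) t)
    (f₀ : ℝ) (hf₀ : 0 ≤ f₀) (hf₀' : f₀ ≤ 1)
    (f : ℝ → ℝ) (hf0 : f 0 = f₀)
    (hf : ∀ t : ℝ, 0 ≤ t →
      HasDerivAt f
        (-2 * (n - 1 : ℝ) * (1 - f t) * (deriv h (R t)) ^ 2 / (h (R t)) ^ 2) t) :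
    ∀ t : ℝ, 0 ≤ t → (1 - f t) * (h (R t)) ^ 2 = (1 - f₀) * (h a) ^ 2 :=
  stmt_3_general n h hC1 hpos a R hR0 hR f₀ f hf0 hf
end

section
/- Let n ≥ 3 be an integer, let h : ℝ → ℝ be continuously differentiable with h(r) > 0 for all r, h(0) = 1, h'(0) = 0, h'(r) > 0 for all r > 0, and h'(r) < 0 for all r < 0. Let a₀ > 0 and let R : [0, ∞) → (0, ∞) solve R'(t) = -(n-1)·h'(R(t))/h(R(t)) with R(0) = a₀. Let T ∈ (0, ∞] and let φ : [0, T) → ℝ be differentiable with φ(0) = f̄₀ ∈ (0, 1) and φ'(t) ≥ -2(n-1)·(1 - φ(t))·h'(R(t))²/h(R(t))² for all t ∈ [0, T). Then φ(t) ≥ 1 - (1 - f̄₀)·h(a₀)² for all t ∈ [0, T); in particular, if f̄₀ > 1 - 1/h(a₀)², then φ(t) > 0 for all t ∈ [0, T). -/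
/-! Along the barrier `R' = -(n-1) h'(R)/h(R)` one has `(h(R)²)' = -2(n-1) h'(R)²`, so the
differential inequality for `φ` says exactly that `(1 - φ) · h(R)²` is nonincreasing: it stays
below its initial value `(1 - f̄₀) h(a₀)²`. Since `h` increases from `h(0) = 1` on `[0, ∞)` and
`R > 0`, the factor `h(R)²` is at least `1`, which gives `1 - φ ≤ (1 - f̄₀) h(a₀)²`. -/

open Set

lemma one_le_of_deriv_pos {h : ℝ → ℝ} (hh : Continuous h) (h0 : h 0 = 1)
    (hdpos : ∀ r : ℝ, 0 < r → 0 < deriv h r) {r : ℝ} (hr : 0 ≤ r) : 1 ≤ h r := by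
  have hmono : MonotoneOn h (Ici 0) :=
    (strictMonoOn_of_deriv_pos (convex_Ici 0) hh.continuousOn
      (by simpa only [interior_Ici] using fun r (hr : r ∈ Ioi 0) => hdpos r hr)).monotoneOn
  simpa only [h0] using hmono self_mem_Ici hr hr

lemma hasDerivAt_sq_comp_of_hasDerivAt_barrier {h R : ℝ → ℝ} {c s : ℝ}
    (hh : DifferentiableAt ℝ h (R s)) (hRs : h (R s) ≠ 0)
    (hR : HasDerivAt R (-c * deriv h (R s) / h (R s)) s) :
    HasDerivAt (fun x => h (R x) ^ 2) (-2 * c * deriv h (R s) ^ 2) s := by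
  have hd : HasDerivAt (fun x => h (R x) ^ 2)
      ((2 : ℕ) * h (R s) ^ 1 * (deriv h (R s) * (-c * deriv h (R s) / h (R s)))) s :=
    (hh.hasDerivAt.comp s hR).pow 2
  convert hd using 1
  field_simp
  ring

lemma antitoneOn_one_sub_mul_sq_comp {h R φ φ' : ℝ → ℝ} {c : ℝ} {D : Set ℝ} (hD : Convex ℝ D)
    (hh : Differentiable ℝ h) (hpos : ∀ r : ℝ, 0 < h r)
    (hR : ∀ s ∈ D, HasDerivAt R (-c * deriv h (R s) / h (R s)) s)
    (hφ : ∀ s ∈ D, HasDerivAt φ (φ' s) s)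
    (hφ' : ∀ s ∈ D, -2 * c * (1 - φ s) * deriv h (R s) ^ 2 / h (R s) ^ 2 ≤ φ' s) :
    AntitoneOn (fun s => (1 - φ s) * h (R s) ^ 2) D := by
  have hderiv : ∀ s ∈ D, HasDerivAt (fun s => (1 - φ s) * h (R s) ^ 2)
      (-φ' s * h (R s) ^ 2 + (1 - φ s) * (-2 * c * deriv h (R s) ^ 2)) s := fun s hs =>
    ((hφ s hs).const_sub 1).mul
      (hasDerivAt_sq_comp_of_hasDerivAt_barrier (hh _) (hpos _).ne' (hR s hs))
  refine antitoneOn_of_hasDerivWithinAt_nonpos hD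
    (fun s hs => (hderiv s hs).continuousAt.continuousWithinAt)
    (fun s hs => (hderiv s (interior_subset hs)).hasDerivWithinAt) fun s hs => ?_
  have hs := interior_subset hs
  have hsq : 0 < h (R s) ^ 2 := pow_pos (hpos _) 2
  have := (div_le_iff₀ hsq).1 (hφ' s hs)
  linarith

lemma one_sub_le_of_one_sub_mul_le {p K C : ℝ} (hpK : (1 - p) * K ≤ C) (hK : 1 ≤ K)
    (hC : 0 ≤ C) : 1 - C ≤ p := by
  rcases le_or_gt (1 - p) 0 with hp | hp
  · linarith
  · nlinarith

theorem stmt_7_general (n : ℕ) (h : ℝ → ℝ) (hC1 : ContDiff ℝ 1 h)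
    (hpos : ∀ r : ℝ, 0 < h r) (h0 : h 0 = 1)
    (hdpos : ∀ r : ℝ, 0 < r → 0 < deriv h r)
    (a₀ : ℝ) (R : ℝ → ℝ) (hR0 : R 0 = a₀)
    (hRpos : ∀ t : ℝ, 0 ≤ t → 0 < R t)
    (hR : ∀ t : ℝ, 0 ≤ t →
      HasDerivAt R (-(n - 1 : ℝ) * deriv h (R t) / h (R t)) t)
    (T : EReal) (f₀ : ℝ) (hf₀' : f₀ < 1)
    (φ : ℝ → ℝ) (hφ0 : φ 0 = f₀)
    (hφ : ∀ t : ℝ, 0 ≤ t → (t : EReal) < T →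
      ∃ d : ℝ, HasDerivAt φ d t ∧
        -2 * (n - 1 : ℝ) * (1 - φ t) * (deriv h (R t)) ^ 2 / (h (R t)) ^ 2 ≤ d) :
    (∀ t : ℝ, 0 ≤ t → (t : EReal) < T → 1 - (1 - f₀) * (h a₀) ^ 2 ≤ φ t) ∧
    (1 - 1 / (h a₀) ^ 2 < f₀ →
      ∀ t : ℝ, 0 ≤ t → (t : EReal) < T → 0 < φ t) := by
  choose! φ' hφ' hφ'_ge using hφ
  have hbound : ∀ t : ℝ, 0 ≤ t → (t : EReal) < T → 1 - (1 - f₀) * h a₀ ^ 2 ≤ φ t := by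
    intro t ht htT
    have hIcc : ∀ s ∈ Icc 0 t, 0 ≤ s ∧ (s : EReal) < T := fun s hs =>
      ⟨hs.1, (EReal.coe_le_coe_iff.2 hs.2).trans_lt htT⟩
    have hanti := antitoneOn_one_sub_mul_sq_comp (convex_Icc 0 t)
      (hC1.differentiable one_ne_zero) hpos (fun s hs => hR s (hIcc s hs).1)
      (fun s hs => hφ' s (hIcc s hs).1 (hIcc s hs).2)
      (fun s hs => hφ'_ge s (hIcc s hs).1 (hIcc s hs).2)
    have hdecay : (1 - φ t) * h (R t) ^ 2 ≤ (1 - f₀) * h a₀ ^ 2 := by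
      simpa only [hφ0, hR0] using hanti (left_mem_Icc.2 ht) (right_mem_Icc.2 ht) ht
    have hhR : 1 ≤ h (R t) := one_le_of_deriv_pos hC1.continuous h0 hdpos (hRpos t ht).le
    exact one_sub_le_of_one_sub_mul_le hdecay (one_le_pow₀ hhR)
      (mul_nonneg (by linarith) (sq_nonneg _))
  refine ⟨hbound, fun hf₀ t ht htT => ?_⟩
  have hlt : (1 - f₀) * h a₀ ^ 2 < 1 := by
    have hsq : 0 < h a₀ ^ 2 := pow_pos (hpos a₀) 2
    rw [← lt_div_iff₀ hsq]
    linarith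
  linarith [hbound t ht htT]

/-- quantitative gradient lower bound of Theorem 3.7: any function `φ` on
`[0, T)` with `φ(0) = f̄₀ ∈ (0,1)` and `φ' ≥ -2(n-1)(1-φ)·h'(R)²/h(R)²` along the barrier
solution `R` satisfies `φ(t) ≥ 1 - (1 - f̄₀)·h(a₀)²`; in particular `φ > 0` when
`f̄₀ > 1 - 1/h(a₀)²`. -/
theorem stmt_7 (n : ℕ) (hn : 3 ≤ n) (h : ℝ → ℝ) (hC1 : ContDiff ℝ 1 h)
    (hpos : ∀ r : ℝ, 0 < h r) (h0 : h 0 = 1) (hd0 : deriv h 0 = 0)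
    (hdpos : ∀ r : ℝ, 0 < r → 0 < deriv h r)
    (hdneg : ∀ r : ℝ, r < 0 → deriv h r < 0)
    (a₀ : ℝ) (ha₀ : 0 < a₀) (R : ℝ → ℝ) (hR0 : R 0 = a₀)
    (hRpos : ∀ t : ℝ, 0 ≤ t → 0 < R t)
    (hR : ∀ t : ℝ, 0 ≤ t →
      HasDerivAt R (-(n - 1 : ℝ) * deriv h (R t) / h (R t)) t)
    (T : EReal) (hT : 0 < T) (f₀ : ℝ) (hf₀ : 0 < f₀) (hf₀' : f₀ < 1)
    (φ : ℝ → ℝ) (hφ0 : φ 0 = f₀)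
    (hφ : ∀ t : ℝ, 0 ≤ t → (t : EReal) < T →
      ∃ d : ℝ, HasDerivAt φ d t ∧
        -2 * (n - 1 : ℝ) * (1 - φ t) * (deriv h (R t)) ^ 2 / (h (R t)) ^ 2 ≤ d) :
    (∀ t : ℝ, 0 ≤ t → (t : EReal) < T → 1 - (1 - f₀) * (h a₀) ^ 2 ≤ φ t) ∧
    (1 - 1 / (h a₀) ^ 2 < f₀ →
      ∀ t : ℝ, 0 ≤ t → (t : EReal) < T → 0 < φ t) :=
  stmt_7_general n h hC1 hpos h0 hdpos a₀ R hR0 hRpos hR T f₀ hf₀' φ hφ0 hφ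
end

section
/- Let n ≥ 3 be an integer, m > 0, and κ > 0 with n^n·m²·κ^{n-2} < 4(n-2)^{n-2}, and define ω(s) = 1 - m·s^{2-n} - κ·s² for s > 0. Suppose 0 < s̲ < s̄ satisfy ω(s̲) = ω(s̄) = 0 and ω(s) > 0 for all s ∈ (s̲, s̄). Then s̲ < (m·n/2)^{1/(n-2)} < s̄. -/
set_option maxHeartbeats 1600000 in
/-- case `κ > 0` of the Claim in Section 3.5: under the mass–cosmological
constant condition `nⁿm²κ^{n-2} < 4(n-2)^{n-2}`, the threshold radius `(mn/2)^{1/(n-2)}`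
lies strictly between the two horizon radii `s̲ < s̄` of `ω(s) = 1 - m·s^{2-n} - κ·s²`. -/
theorem stmt_11 (n : ℕ) (hn : 3 ≤ n) (m κ : ℝ) (hm : 0 < m) (hκ : 0 < κ)
    (hcond : (n : ℝ) ^ n * m ^ 2 * κ ^ (n - 2) < 4 * ((n : ℝ) - 2) ^ (n - 2))
    (ω : ℝ → ℝ)
    (hω : ∀ s : ℝ, 0 < s → ω s = 1 - m * s ^ ((2 : ℝ) - n) - κ * s ^ 2)
    (s₁ s₂ : ℝ) (hs₁ : 0 < s₁) (hs₁₂ : s₁ < s₂)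
    (hzero₁ : ω s₁ = 0) (hzero₂ : ω s₂ = 0)
    (hωpos : ∀ s : ℝ, s₁ < s → s < s₂ → 0 < ω s) :
    s₁ < (m * n / 2) ^ (1 / ((n : ℝ) - 2)) ∧
      (m * n / 2) ^ (1 / ((n : ℝ) - 2)) < s₂ := by
  obtain ⟨k, rfl⟩ : ∃ k, n = k + 3 := ⟨n - 3, by omega⟩
  clear hn
  have hk2 : k + 3 - 2 = k + 1 := by omega
  rw [hk2] at hcond
  have hcast : ((k + 3 : ℕ) : ℝ) = (k : ℝ) + 3 := by push_cast; ring
  rw [hcast] at hcond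
  have h32 : ((k : ℝ) + 3 - 2) = (k : ℝ) + 1 := by ring
  rw [h32] at hcond
  -- the polynomial g s = s^(k+1) * ω s
  set g : ℝ → ℝ := fun s => s ^ (k + 1) - m - κ * s ^ (k + 3) with hgdef
  have hgω : ∀ s : ℝ, 0 < s → g s = s ^ (k + 1) * ω s := by
    intro s hs
    rw [hω s hs]
    have h1 : s ^ ((2 : ℝ) - (k + 3 : ℕ)) = (s ^ (k + 1 : ℕ) : ℝ)⁻¹ := by
      rw [← Real.rpow_natCast s (k + 1), ← Real.rpow_neg hs.le]
      congr 1
      push_cast; ring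
    rw [h1]
    have h2 : (s ^ (k + 1 : ℕ) : ℝ) ≠ 0 := by positivity
    simp only [hgdef]
    field_simp
    ring
  -- the threshold radius
  set S : ℝ := (m * (k + 3 : ℕ) / 2) ^ (1 / (((k + 3 : ℕ) : ℝ) - 2)) with hSdef
  have hbase : (0 : ℝ) < m * (k + 3 : ℕ) / 2 := by positivity
  have hSpos : 0 < S := Real.rpow_pos_of_pos hbase _
  have hexp : (((k + 3 : ℕ) : ℝ) - 2) = ((k + 1 : ℕ) : ℝ) := by push_cast; ring
  have hSpow : S ^ (k + 1) = m * (k + 3 : ℕ) / 2 := by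
    rw [hSdef, hexp, ← Real.rpow_natCast (_ ^ _) (k + 1), ← Real.rpow_mul hbase.le]
    rw [one_div, inv_mul_cancel₀ (by positivity), Real.rpow_one]
  set c : ℝ := ((k : ℝ) + 1) / (κ * ((k : ℝ) + 3)) with hcdef
  have hc : (0 : ℝ) < c := by positivity
  -- key positivity: g S > 0
  have hS2 : S ^ 2 < c := by
    refine lt_of_pow_lt_pow_left₀ (k + 1) hc.le ?_
    have hL : (S ^ 2) ^ (k + 1) = (m * (k + 3 : ℕ) / 2) ^ 2 := by
      rw [← pow_mul, mul_comm 2 (k + 1), pow_mul, hSpow]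
    rw [hL, hcdef, div_pow, div_pow, lt_div_iff₀ (by positivity)]
    have hpow : ((k : ℝ) + 3) ^ (k + 3) = ((k : ℝ) + 3) ^ 2 * ((k : ℝ) + 3) ^ (k + 1) := by
      rw [← pow_add]; congr 1; omega
    rw [hpow] at hcond
    rw [hcast, mul_pow, mul_pow]
    norm_num
    nlinarith [pow_pos (show (0:ℝ) < (k:ℝ)+3 by positivity) (k+1),
      pow_pos hκ (k+1), sq_nonneg m]
  have hgS : 0 < g S := by
    have hS3 : S ^ (k + 3) = S ^ (k + 1) * S ^ 2 := by rw [← pow_add]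
    have h2 : S ^ 2 * (κ * ((k : ℝ) + 3)) < (k : ℝ) + 1 :=
      (lt_div_iff₀ (by positivity)).mp hS2
    simp only [hgdef]
    rw [hS3, hSpow, hcast]
    nlinarith [mul_lt_mul_of_pos_left h2 (half_pos hm)]
  -- unimodality of g
  set t : ℝ := Real.sqrt c with htdef
  have htpos : 0 < t := Real.sqrt_pos.mpr hc
  have ht2 : t ^ 2 = c := Real.sq_sqrt hc.le
  have hderiv : ∀ x : ℝ,
      HasDerivAt g (((k : ℝ) + 1) * x ^ k - κ * (((k : ℝ) + 3) * x ^ (k + 2))) x := by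
    intro x
    have h1 : HasDerivAt (fun s : ℝ => s ^ (k + 1)) (((k : ℝ) + 1) * x ^ k) x := by
      have := hasDerivAt_pow (k + 1) x
      simpa using this
    have h2 : HasDerivAt (fun s : ℝ => κ * s ^ (k + 3))
        (κ * (((k : ℝ) + 3) * x ^ (k + 2))) x := by
      have := (hasDerivAt_pow (k + 3) x).const_mul κ
      simpa using this
    exact (h1.sub_const m).sub h2
  have hcont : Continuous g := by
    simp only [hgdef]
    exact ((continuous_pow _).sub continuous_const).sub (continuous_const.mul (continuous_pow _))
  have hmono : StrictMonoOn g (Set.Icc 0 t) := by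
    apply strictMonoOn_of_deriv_pos (convex_Icc 0 t) hcont.continuousOn
    intro x hx
    rw [interior_Icc] at hx
    rw [(hderiv x).deriv]
    have hx0 : 0 < x := hx.1
    have hxc : x ^ 2 < c := by
      rw [← ht2]; exact pow_lt_pow_left₀ hx.2 hx0.le (by norm_num)
    have hlt : κ * ((k : ℝ) + 3) * x ^ 2 < (k : ℝ) + 1 := by
      rw [hcdef, lt_div_iff₀ (by positivity)] at hxc; linarith
    have hk2' : x ^ (k + 2) = x ^ k * x ^ 2 := by rw [← pow_add]
    rw [hk2']
    nlinarith [pow_pos hx0 k]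
  have hanti : StrictAntiOn g (Set.Ici t) := by
    apply strictAntiOn_of_deriv_neg (convex_Ici t) hcont.continuousOn
    intro x hx
    rw [interior_Ici] at hx
    rw [(hderiv x).deriv]
    have hx0 : 0 < x := htpos.trans hx
    have hxc : c < x ^ 2 := by
      rw [← ht2]; exact pow_lt_pow_left₀ hx htpos.le (by norm_num)
    have hlt : (k : ℝ) + 1 < κ * ((k : ℝ) + 3) * x ^ 2 := by
      rw [hcdef, div_lt_iff₀ (by positivity)] at hxc; linarith
    have hk2' : x ^ (k + 2) = x ^ k * x ^ 2 := by rw [← pow_add]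
    rw [hk2']
    nlinarith [pow_pos hx0 k]
  -- quasiconcavity
  have hquasi : ∀ a b d : ℝ, 0 < a → a < b → b < d → min (g a) (g d) < g b := by
    intro a b d ha hab hbd
    rcases le_or_gt b t with hbt | htb
    · have hma : a ∈ Set.Icc (0 : ℝ) t := ⟨ha.le, hab.le.trans hbt⟩
      have hmb : b ∈ Set.Icc (0 : ℝ) t := ⟨(ha.trans hab).le, hbt⟩
      exact lt_of_le_of_lt (min_le_left _ _) (hmono hma hmb hab)
    · have hmb : b ∈ Set.Ici t := htb.le
      have hmd : d ∈ Set.Ici t := (htb.trans hbd).le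
      exact lt_of_le_of_lt (min_le_right _ _) (hanti hmb hmd hbd)
  -- values at zeros and midpoint
  have hg1 : g s₁ = 0 := by rw [hgω s₁ hs₁, hzero₁, mul_zero]
  have hs₂pos : 0 < s₂ := hs₁.trans hs₁₂
  have hg2 : g s₂ = 0 := by rw [hgω s₂ hs₂pos, hzero₂, mul_zero]
  set p : ℝ := (s₁ + s₂) / 2 with hpdef
  have hp1 : s₁ < p := by rw [hpdef]; linarith
  have hp2 : p < s₂ := by rw [hpdef]; linarith
  have hppos : 0 < p := hs₁.trans hp1
  have hgp : 0 < g p := by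
    rw [hgω p hppos]
    exact mul_pos (by positivity) (hωpos p hp1 hp2)
  constructor
  · by_contra h
    push_neg at h
    rcases eq_or_lt_of_le h with heq | hlt
    · rw [← heq] at hg1; exact absurd hg1 hgS.ne'
    · have hq := hquasi S s₁ p hSpos hlt hp1
      rw [hg1] at hq
      exact absurd hq (not_lt.mpr (le_min hgS.le hgp.le))
  · by_contra h
    push_neg at h
    rcases eq_or_lt_of_le h with heq | hlt
    · rw [heq] at hg2; exact absurd hg2 hgS.ne'
    · have hq := hquasi p s₂ S hppos hp2 hlt
      rw [hg2] at hq
      exact absurd hq (not_lt.mpr (le_min hgp.le hgS.le))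
end

section
/- Let n ≥ 3 be an integer, m > 0 and κ real, and define ω(s) = 1 - m·s^{2-n} - κ·s² for s > 0. Let J ⊆ ℝ be an open interval and h : J → (0, ∞) a twice differentiable function satisfying ω(h(r)) > 0, h'(r) = √(ω(h(r))) and h''(r) = ω'(h(r))/2 for all r ∈ J. Then h(r)·h''(r) - h'(r)² = (m·n/2)·h(r)^{2-n} - 1 for all r ∈ J. Consequently, h(r)·h''(r) - h'(r)² ≥ 0 if and only if h(r) ≤ (m·n/2)^{1/(n-2)}. -/
/-- verification of condition (C3) for de Sitter–Schwarzschild: for the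
warping function `h` obtained from `ω(s) = 1 - m·s^{2-n} - κ·s²` via `h' = √(ω∘h)` and
`h'' = ω'(h)/2` (with `ω'(s) = m(n-2)s^{1-n} - 2κs`), one has
`h·h'' - h'² = (mn/2)·h^{2-n} - 1`, which is nonnegative iff `h ≤ (mn/2)^{1/(n-2)}`. -/
theorem stmt_13 (n : ℕ) (hn : 3 ≤ n) (m κ : ℝ) (hm : 0 < m)
    (ω : ℝ → ℝ)
    (hω : ∀ s : ℝ, 0 < s → ω s = 1 - m * s ^ ((2 : ℝ) - n) - κ * s ^ 2)
    (J : Set ℝ) (hJopen : IsOpen J) (hJconn : J.OrdConnected)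
    (h : ℝ → ℝ) (hpos : ∀ r : ℝ, r ∈ J → 0 < h r)
    (hωpos : ∀ r : ℝ, r ∈ J → 0 < ω (h r))
    (hd1 : ∀ r : ℝ, r ∈ J → HasDerivAt h (Real.sqrt (ω (h r))) r)
    (hd2 : ∀ r : ℝ, r ∈ J →
      HasDerivAt (deriv h)
        ((m * ((n : ℝ) - 2) * (h r) ^ ((1 : ℝ) - n) - 2 * κ * h r) / 2) r) :
    ∀ r : ℝ, r ∈ J →
      h r * deriv (deriv h) r - (deriv h r) ^ 2 =
        (m * n / 2) * (h r) ^ ((2 : ℝ) - n) - 1 ∧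
      (0 ≤ h r * deriv (deriv h) r - (deriv h r) ^ 2 ↔
        h r ≤ (m * n / 2) ^ (1 / ((n : ℝ) - 2))) := by
  intro r hr
  have ha : 0 < h r := hpos r hr
  have hA : 0 < ω (h r) := hωpos r hr
  have e1 : deriv h r = Real.sqrt (ω (h r)) := (hd1 r hr).deriv
  have e2 : deriv (deriv h) r
      = (m * ((n : ℝ) - 2) * (h r) ^ ((1 : ℝ) - n) - 2 * κ * h r) / 2 :=
    (hd2 r hr).deriv
  have hsq : (deriv h r) ^ 2 = ω (h r) := by rw [e1, Real.sq_sqrt hA.le]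
  have hωe : ω (h r) = 1 - m * (h r) ^ ((2 : ℝ) - n) - κ * (h r) ^ 2 := hω _ ha
  have hmul : h r * (h r) ^ ((1 : ℝ) - n) = (h r) ^ ((2 : ℝ) - n) := by
    rw [show ((2 : ℝ) - n) = 1 + ((1 : ℝ) - n) by ring, Real.rpow_add ha, Real.rpow_one]
  have key : h r * deriv (deriv h) r - (deriv h r) ^ 2
      = (m * n / 2) * (h r) ^ ((2 : ℝ) - n) - 1 := by
    rw [e2, hsq, hωe]
    linear_combination (m * ((n : ℝ) - 2) / 2) * hmul
  refine ⟨key, ?_⟩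
  rw [key]
  have he : (0 : ℝ) < (n : ℝ) - 2 := by
    have : (3 : ℝ) ≤ (n : ℝ) := by exact_mod_cast hn
    linarith
  have hc : 0 < m * n / 2 := by
    have : (0 : ℝ) < (n : ℝ) := by linarith
    positivity
  have hP : 0 < (h r) ^ ((n : ℝ) - 2) := Real.rpow_pos_of_pos ha _
  rw [one_div, Real.le_rpow_inv_iff_of_pos ha.le hc.le he,
    show ((2 : ℝ) - n) = -((n : ℝ) - 2) by ring, Real.rpow_neg ha.le,
    sub_nonneg, ← div_eq_mul_inv, le_div_iff₀ hP, one_mul]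
end
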